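/- arXiv:1303.3345 — 2 statements merged into one kernel-verified Lean document; each statement's English description precedes it below -/
import Mathlib

section
/- Let β > 1, θ > β/(β-1), ξ ∈ (0, (θ-1)^{1/(β-1)}), f(x) = sgn(x)|x|^β, and g(t) = -(1+t)^{-θ}·(ξ(θ-1) - ξ^β(1+t)^{-β(θ-1)+θ}) for t ≥ 0, so that g(t) < 0 for all t ≥ 0. Then the unique continuous solution of x'(t) = -f(x(t)) + g(t), t > 0, x(0) = ξ, is x(t) = ξ(1+t)^{-(θ-1)}; moreover, with F(x) = ∫_x^1 du/f(u) = (x^{1-β}-1)/(β-1), one has (f∘F⁻¹)(t) ~ ((β-1)t)^{-β/(β-1)} as t → ∞, lim_{t→∞} g(t)/(f∘F⁻¹)(t) = 0, and yet lim_{t→∞} F(x(t))/t = +∞. -/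
/-! Uniqueness holds because `f` is increasing: along two solutions `x, y` the derivative of
`(y - x)²` is `-2 (y - x) (f y - f x) ≤ 0`. Since `F(x) = (x^{1-β} - 1)/(β - 1)`, one has
`f(F⁻¹ t) = (1 + (β - 1) t)^{-β/(β-1)}`, whereas `|g(t)| ≲ (1 + t)^{-θ}` decays faster because
`θ > β/(β - 1)`. The same inequality reads `(θ - 1)(β - 1) > 1`, so
`F(x(t)) ≍ (1 + t)^{(θ-1)(β-1)}` grows superlinearly. -/

open Filter Real Set Topology MeasureTheory

noncomputable section

/-- A function `f : (0,∞) → (0,∞)` is regularly varying at `0` with index `β` if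
`f(λx)/f(x) → λ^β` as `x → 0⁺` for every `λ > 0`. -/
def RVat0 (f : ℝ → ℝ) (β : ℝ) : Prop :=
  ∀ lam : ℝ, 0 < lam →
    Tendsto (fun x => f (lam * x) / f x) (nhdsWithin 0 (Set.Ioi 0)) (nhds (lam ^ β))

/-- A function `h : (0,∞) → (0,∞)` is regularly varying at `∞` with index `α` if
`h(λt)/h(t) → λ^α` as `t → ∞` for every `λ > 0`. -/
def RVatInf (h : ℝ → ℝ) (α : ℝ) : Prop :=
  ∀ lam : ℝ, 0 < lam →
    Tendsto (fun t => h (lam * t) / h t) atTop (nhds (lam ^ α))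

/-- A continuous solution of the perturbed ODE `x'(t) = -f(x(t)) + g(t)`, `t > 0`,
with initial condition `x(0) = ξ`. -/
def IsSol (f g : ℝ → ℝ) (ξ : ℝ) (x : ℝ → ℝ) : Prop :=
  ContinuousOn x (Set.Ici 0) ∧ x 0 = ξ ∧
    ∀ t : ℝ, 0 < t → HasDerivAt x (-f (x t) + g t) t

lemma sign_mul_abs_rpow_of_nonneg {β y : ℝ} (hβ : β ≠ 0) (hy : 0 ≤ y) :
    Real.sign y * |y| ^ β = y ^ β := by
  rcases hy.lt_or_eq with hy | rfl
  · rw [Real.sign_of_pos hy, abs_of_pos hy, one_mul]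
  · simp [zero_rpow hβ]

lemma monotone_sign_mul_abs_rpow {β : ℝ} (hβ : 0 < β) :
    Monotone fun y : ℝ => Real.sign y * |y| ^ β := by
  have hodd (y : ℝ) : Real.sign (-y) * |-y| ^ β = -(Real.sign y * |y| ^ β) := by
    rw [Real.sign_neg, abs_neg, neg_mul]
  refine MonotoneOn.Iic_union_Ici (a := 0) (fun y hy z hz hyz => ?_) (fun y hy z hz hyz => ?_)
  · have hz' : 0 ≤ -z := neg_nonneg.2 hz
    have := rpow_le_rpow hz' (neg_le_neg hyz) hβ.le
    rw [← sign_mul_abs_rpow_of_nonneg hβ.ne' hz', ← sign_mul_abs_rpow_of_nonneg hβ.ne'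
      (hz'.trans (neg_le_neg hyz)), hodd, hodd] at this
    simpa using this
  · simp only [sign_mul_abs_rpow_of_nonneg hβ.ne' hy, sign_mul_abs_rpow_of_nonneg hβ.ne' hz]
    exact rpow_le_rpow hy hyz hβ.le

theorem IsSol.eq_of_monotone {f g : ℝ → ℝ} {ξ : ℝ} {x y : ℝ → ℝ} (hf : Monotone f)
    (hx : IsSol f g ξ x) (hy : IsSol f g ξ y) {t : ℝ} (ht : 0 ≤ t) : y t = x t := by
  obtain ⟨hxc, hx0, hxd⟩ := hx
  obtain ⟨hyc, hy0, hyd⟩ := hy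
  have hanti : AntitoneOn (fun s => (y s - x s) ^ 2) (Ici 0) := by
    refine antitoneOn_of_hasDerivWithinAt_nonpos (convex_Ici 0) ((hyc.sub hxc).pow 2)
      (f' := fun s => 2 * (y s - x s) * (f (x s) - f (y s))) (fun s hs => ?_) (fun s hs => ?_)
    · rw [interior_Ici] at hs
      refine (((hyd s hs).fun_sub (hxd s hs)).fun_pow 2).hasDerivWithinAt.congr_deriv ?_
      push_cast
      ring
    · have : 0 ≤ (y s - x s) * (f (y s) - f (x s)) := by
        rcases le_total (x s) (y s) with h | h
        · exact mul_nonneg (sub_nonneg.2 h) (sub_nonneg.2 (hf h))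
        · exact mul_nonneg_of_nonpos_of_nonpos (sub_nonpos.2 h) (sub_nonpos.2 (hf h))
      linarith
  have := hanti self_mem_Ici ht ht
  simp only [hx0, hy0, sub_self] at this
  nlinarith [sq_nonneg (y t - x t)]

lemma tendsto_affine_div_affine (a b c : ℝ) {d : ℝ} (hd : d ≠ 0) :
    Tendsto (fun t => (a + b * t) / (c + d * t)) atTop (𝓝 (b / d)) := by
  have h (e k : ℝ) : Tendsto (fun t : ℝ => e * t⁻¹ + k) atTop (𝓝 k) := by
    simpa using (tendsto_inv_atTop_zero.const_mul e).add_const k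
  refine ((h a b).div (h c d) hd).congr' ?_
  filter_upwards [eventually_gt_atTop 0] with t ht
  change (a * t⁻¹ + b) / (c * t⁻¹ + d) = _
  rw [← mul_div_mul_right _ _ ht.ne']
  field_simp

lemma tendsto_rpow_div_rpow {α : Type*} {l : Filter α} {u v : α → ℝ} {L : ℝ} (q : ℝ)
    (hu : ∀ᶠ a in l, 0 ≤ u a) (hv : ∀ᶠ a in l, 0 ≤ v a)
    (h : Tendsto (fun a => u a / v a) l (𝓝 L)) (hL : L ≠ 0) :
    Tendsto (fun a => u a ^ q / v a ^ q) l (𝓝 (L ^ q)) := by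
  refine (h.rpow_const (Or.inl hL)).congr' ?_
  filter_upwards [hu, hv] with a hua hva using div_rpow hua hva q

lemma tendsto_one_add_rpow_nhds_zero {r : ℝ} (hr : r < 0) :
    Tendsto (fun t : ℝ => (1 + t) ^ r) atTop (𝓝 0) := by
  have := (tendsto_rpow_neg_atTop (neg_pos.2 hr)).comp
    (tendsto_atTop_add_const_left atTop 1 tendsto_id)
  simpa [Function.comp_def] using this

lemma tendsto_mul_one_add_rpow_add_div_atTop {a σ : ℝ} (b : ℝ) (ha : 0 < a) (hσ : 1 < σ) :
    Tendsto (fun t => (a * (1 + t) ^ σ + b) / t) atTop atTop := by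
  have hlow : Tendsto (fun t : ℝ => a * t ^ (σ - 1) + b / t) atTop atTop :=
    ((tendsto_rpow_atTop (sub_pos.2 hσ)).const_mul_atTop ha).atTop_add
      (tendsto_const_nhds.div_atTop tendsto_id)
  refine tendsto_atTop_mono' atTop ?_ hlow
  filter_upwards [eventually_gt_atTop 0] with t ht
  rw [add_div, mul_div_assoc, rpow_sub_one ht.ne']
  gcongr
  linarith

lemma integral_one_div_sign_mul_abs_rpow {β y : ℝ} (hβ : β ≠ 1) (hy : 0 < y) :
    ∫ u in y..1, 1 / (Real.sign u * |u| ^ β) = (y ^ (1 - β) - 1) / (β - 1) := by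
  have hpos : ∀ u ∈ uIcc y 1, 0 < u := fun u hu => (lt_min hy one_pos).trans_le hu.1
  rw [intervalIntegral.integral_congr (g := fun u => u ^ (-β)) fun u hu => by
      simp [Real.sign_of_pos (hpos u hu), abs_of_pos (hpos u hu), rpow_neg (hpos u hu).le],
    integral_rpow (Or.inr ⟨by contrapose! hβ; linarith, fun h => (hpos 0 h).false⟩),
    one_rpow, neg_add_eq_sub]
  have : 1 - β ≠ 0 := sub_ne_zero.2 hβ.symm
  field_simp
  ring

lemma rpow_eq_of_rpow_sub_one_div_eq {β y t : ℝ} (hβ : β ≠ 1) (hy : 0 < y)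
    (h : (y ^ (1 - β) - 1) / (β - 1) = t) : y ^ β = (1 + (β - 1) * t) ^ (-β / (β - 1)) := by
  have hβ' : β - 1 ≠ 0 := sub_ne_zero.2 hβ
  rw [← h, mul_div_cancel₀ _ hβ', add_sub_cancel, ← rpow_mul hy.le]
  congr 1
  field_simp
  ring

lemma tendsto_one_add_mul_rpow_div_mul_rpow {c : ℝ} (q : ℝ) (hc : 0 < c) :
    Tendsto (fun t => (1 + c * t) ^ q / (c * t) ^ q) atTop (𝓝 1) := by
  have h := tendsto_rpow_div_rpow q (u := fun t => 1 + c * t) (v := fun t => 0 + c * t)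
    (eventually_ge_atTop 0 |>.mono fun t ht => by positivity)
    (eventually_ge_atTop 0 |>.mono fun t ht => by positivity)
    (tendsto_affine_div_affine 1 c 0 hc.ne') (div_ne_zero hc.ne' hc.ne')
  simpa [div_self hc.ne'] using h

lemma isSol_mul_one_add_rpow {β θ ξ : ℝ} (hξ : 0 < ξ) {f g x : ℝ → ℝ}
    (hf : ∀ y : ℝ, f y = Real.sign y * |y| ^ β)
    (hg : ∀ t : ℝ, 0 ≤ t → g t =
      -((1 + t) ^ (-θ) * (ξ * (θ - 1) - ξ ^ β * (1 + t) ^ (-(β * (θ - 1)) + θ))))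
    (hx : ∀ t : ℝ, 0 ≤ t → x t = ξ * (1 + t) ^ (-(θ - 1))) :
    IsSol f g ξ x := by
  have hderiv (t : ℝ) (ht : 0 ≤ t) : HasDerivAt (fun s => ξ * (1 + s) ^ (-(θ - 1)))
      (ξ * (1 * -(θ - 1) * (1 + t) ^ (-(θ - 1) - 1))) t :=
    (((hasDerivAt_id' t).const_add 1).rpow_const (Or.inl (by positivity))).const_mul ξ
  refine ⟨ContinuousOn.congr (fun t ht => (hderiv t ht).continuousAt.continuousWithinAt) hx,
    by simp [hx], fun t ht => ?_⟩
  have hA : 0 < 1 + t := by linarith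
  refine ((hderiv t ht.le).congr_of_eventuallyEq ?_).congr_deriv ?_
  · filter_upwards [Ioi_mem_nhds ht] with s hs using hx s hs.le
  rw [hg t ht.le, hf, hx t ht.le, Real.sign_of_pos (by positivity), abs_of_pos (by positivity),
    mul_rpow hξ.le (by positivity), ← rpow_mul hA.le, show -(θ - 1) - 1 = -θ by ring]
  have hexp : (1 + t) ^ (-θ) * (1 + t) ^ (-(β * (θ - 1)) + θ) = (1 + t) ^ (-(θ - 1) * β) := by
    rw [← rpow_add hA]
    ring_nf
  linear_combination -ξ ^ β * hexp

lemma perturbation_neg {β θ ξ t : ℝ} (hθ : -(β * (θ - 1)) + θ ≤ 0) (hξ : 0 < ξ)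
    (hξθ : ξ ^ (β - 1) < θ - 1) (ht : 0 ≤ t) :
    -((1 + t) ^ (-θ) * (ξ * (θ - 1) - ξ ^ β * (1 + t) ^ (-(β * (θ - 1)) + θ))) < 0 := by
  refine neg_neg_of_pos (mul_pos (by positivity) (sub_pos.2 ?_))
  calc ξ ^ β * (1 + t) ^ (-(β * (θ - 1)) + θ) ≤ ξ ^ β * 1 := by
        gcongr
        exact rpow_le_one_of_one_le_of_nonpos (by linarith) hθ
    _ = ξ * ξ ^ (β - 1) := by rw [mul_one, mul_comm, ← rpow_add_one hξ.ne', sub_add_cancel]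
    _ < ξ * (θ - 1) := by gcongr

lemma tendsto_perturbation_div_rpow {β θ : ℝ} (ξ : ℝ) (hβ : 1 < β) (hθ : β / (β - 1) < θ) :
    Tendsto (fun t => -((1 + t) ^ (-θ) * (ξ * (θ - 1) - ξ ^ β * (1 + t) ^ (-(β * (θ - 1)) + θ)))
      / (1 + (β - 1) * t) ^ (-β / (β - 1))) atTop (𝓝 0) := by
  set p := β / (β - 1)
  have hβ1 : 0 < β - 1 := by linarith
  have hexp : -(β * (θ - 1)) + θ < 0 := by
    have := (div_lt_iff₀ hβ1).1 hθ
    nlinarith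
  have hbracket := ((tendsto_one_add_rpow_nhds_zero hexp).const_mul (ξ ^ β)).const_sub
    (ξ * (θ - 1)) |>.neg
  have hratio := tendsto_rpow_div_rpow p (u := fun t => 1 + (β - 1) * t) (v := fun t => 1 + 1 * t)
    (eventually_ge_atTop 0 |>.mono fun t ht => by positivity)
    (eventually_ge_atTop 0 |>.mono fun t ht => by positivity)
    (tendsto_affine_div_affine 1 (β - 1) 1 one_ne_zero) (by simp [hβ1.ne'])
  have hdecay := tendsto_one_add_rpow_nhds_zero (sub_neg.2 hθ)
  have := (hbracket.mul hratio).mul hdecay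
  rw [mul_zero] at this
  refine this.congr' ?_
  filter_upwards [eventually_ge_atTop 0] with t ht
  have hA : 0 < 1 + t := by linarith
  have hB : 0 < 1 + (β - 1) * t := by positivity
  rw [one_mul, neg_div (β - 1) β, rpow_neg hB.le, rpow_neg hA.le, rpow_sub hA]
  field_simp
  ring

/-- Example 3.1: with `β > 1`, `θ > β/(β-1)`, `ξ ∈ (0,(θ-1)^{1/(β-1)})`,
`f(x) = sgn(x)|x|^β` and the given negative perturbation `g`, the unique continuous
solution of `x' = -f(x) + g`, `x(0) = ξ`, is `x(t) = ξ(1+t)^{-(θ-1)}`; moreover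
`F(x) = (x^{1-β}-1)/(β-1)`, `(f∘F⁻¹)(t) ~ ((β-1)t)^{-β/(β-1)}`,
`g(t)/(f∘F⁻¹)(t) → 0`, and yet `F(x(t))/t → +∞`. -/
theorem stmt_16 (β θ ξ : ℝ) (hβ : 1 < β) (hθ : β / (β - 1) < θ)
    (hξ : ξ ∈ Set.Ioo (0:ℝ) ((θ - 1) ^ ((1:ℝ) / (β - 1))))
    (f g F Finv x : ℝ → ℝ)
    (hf : ∀ y : ℝ, f y = Real.sign y * |y| ^ β)
    (hg : ∀ t : ℝ, 0 ≤ t → g t =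
      -((1 + t) ^ (-θ) * (ξ * (θ - 1) - ξ ^ β * (1 + t) ^ (-(β * (θ - 1)) + θ))))
    (hxdef : ∀ t : ℝ, 0 ≤ t → x t = ξ * (1 + t) ^ (-(θ - 1)))
    (hF : ∀ y : ℝ, 0 < y → F y = ∫ u in y..(1:ℝ), 1 / f u)
    (hFinv : ∀ t : ℝ, 0 ≤ t → 0 < Finv t ∧ F (Finv t) = t) :
    (∀ t : ℝ, 0 ≤ t → g t < 0) ∧
    IsSol f g ξ x ∧
    (∀ y : ℝ → ℝ, IsSol f g ξ y → ∀ t : ℝ, 0 ≤ t → y t = x t) ∧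
    (∀ y : ℝ, 0 < y → F y = (y ^ (1 - β) - 1) / (β - 1)) ∧
    Tendsto (fun t => f (Finv t) / ((β - 1) * t) ^ (-β / (β - 1))) atTop (nhds 1) ∧
    Tendsto (fun t => g t / f (Finv t)) atTop (nhds 0) ∧
    Tendsto (fun t => F (x t) / t) atTop atTop := by
  have hβ1 : 0 < β - 1 := by linarith
  have hσ : 1 < (θ - 1) * (β - 1) := by
    have := (div_lt_iff₀ hβ1).1 hθ
    nlinarith
  obtain ⟨hξ0, hξθ⟩ := hξ
  replace hξθ : ξ ^ (β - 1) < θ - 1 := by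
    have hθ1 : 0 < θ - 1 := by nlinarith
    simpa [← rpow_mul hθ1.le, hβ1.ne'] using rpow_lt_rpow hξ0.le hξθ hβ1
  have hFeq (y : ℝ) (hy : 0 < y) : F y = (y ^ (1 - β) - 1) / (β - 1) := by
    simpa only [hF y hy, hf] using integral_one_div_sign_mul_abs_rpow hβ.ne' hy
  have hfFinv : ∀ᶠ t in atTop, f (Finv t) = (1 + (β - 1) * t) ^ (-β / (β - 1)) := by
    filter_upwards [eventually_ge_atTop 0] with t ht
    obtain ⟨hpos, hFt⟩ := hFinv t ht
    rw [hf, sign_mul_abs_rpow_of_nonneg (by positivity) hpos.le]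
    exact rpow_eq_of_rpow_sub_one_div_eq hβ.ne' hpos (hFeq _ hpos ▸ hFt)
  have hsol := isSol_mul_one_add_rpow hξ0 hf hg hxdef
  have hmono : Monotone f := funext hf ▸ monotone_sign_mul_abs_rpow (by positivity)
  refine ⟨fun t ht => hg t ht ▸ perturbation_neg (by linarith) hξ0 hξθ ht, hsol,
    fun y hy t ht => hsol.eq_of_monotone hmono hy ht,
    hFeq, ?_, ?_, ?_⟩
  · refine (tendsto_one_add_mul_rpow_div_mul_rpow (-β / (β - 1)) hβ1).congr' ?_
    filter_upwards [hfFinv] with t ht using by rw [ht]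
  · refine (tendsto_perturbation_div_rpow ξ hβ hθ).congr' ?_
    filter_upwards [hfFinv, eventually_ge_atTop 0] with t ht ht0 using by rw [ht, hg t ht0]
  · refine (tendsto_mul_one_add_rpow_add_div_atTop (-1 / (β - 1))
      (by positivity : 0 < ξ ^ (1 - β) / (β - 1)) hσ).congr' ?_
    filter_upwards [eventually_ge_atTop 0] with t ht
    rw [hFeq _ (by rw [hxdef t ht]; positivity), hxdef t ht, mul_rpow hξ0.le (by positivity),
      ← rpow_mul (by linarith)]
    ring_nf
end
end

section
/- Let β > 1, A > (β-1)^{-1/(β-1)}, ξ > 0, f(x) = sgn(x)|x|^β, and g(t) = (A^β - A/(β-1))·((A/ξ)^{β-1} + t)^{-β/(β-1)} for t ≥ 0, so g(t) > 0 for all t ≥ 0. Then the unique continuous solution of x'(t) = -f(x(t)) + g(t), t > 0, x(0) = ξ, is x(t) = A((A/ξ)^{β-1} + t)^{-1/(β-1)}; moreover, with F(x) = ∫_x^1 du/f(u), one has lim_{t→∞} g(t)/(f∘F⁻¹)(t) = (A^β - A/(β-1))/(β-1)^{-β/(β-1)} =: L > 0, lim_{t→∞} x(t)/F⁻¹(t)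 = A/(β-1)^{-1/(β-1)}, and lim_{t→∞} F(x(t))/t = A^{1-β}/(β-1) =: Λ* ∈ (0,1), which satisfies (1 - Λ*)·Λ*^{-β/(β-1)} = L. -/
open Filter Real Set Topology MeasureTheory

noncomputable section

namespace IsSol

variable {f g : ℝ → ℝ} {ξ : ℝ} {x y : ℝ → ℝ}

lemma congr (hx : IsSol f g ξ x) (hyx : EqOn y x (Ici 0)) : IsSol f g ξ y := by
  obtain ⟨hcont, hx0, hderiv⟩ := hx
  refine ⟨hcont.congr hyx, (hyx self_mem_Ici).trans hx0, fun t ht => ?_⟩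
  rw [hyx ht.le]
  exact (hderiv t ht).congr_of_eventuallyEq
    (eventually_of_mem (Ioi_mem_nhds ht) fun s (hs : 0 < s) => hyx hs.le)

lemma eqOn_of_monotone (hf : Monotone f) (hx : IsSol f g ξ x) (hy : IsSol f g ξ y) :
    EqOn x y (Ici 0) := by
  obtain ⟨hxc, hx0, hx'⟩ := hx
  obtain ⟨hyc, hy0, hy'⟩ := hy
  have hD : ∀ s, 0 < s → HasDerivAt (fun s => (x s - y s) ^ 2)
      (2 * (x s - y s) * (f (y s) - f (x s))) s := fun s hs => by
    refine (((hx' s hs).sub (hy' s hs)).pow 2).congr_deriv ?_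
    simp only [Pi.sub_apply]
    ring
  have hanti : AntitoneOn (fun s => (x s - y s) ^ 2) (Ici 0) := by
    refine antitoneOn_of_deriv_nonpos (convex_Ici 0) ((hxc.sub hyc).pow 2) ?_ ?_ <;>
      rw [interior_Ici]
    · exact fun s hs => (hD s hs).differentiableAt.differentiableWithinAt
    · intro s hs
      rw [(hD s hs).deriv]
      rcases le_total (x s) (y s) with h | h <;> nlinarith [hf h]
  intro t ht
  have hsq : (x t - y t) ^ 2 ≤ 0 := by
    simpa [hx0, hy0] using hanti self_mem_Ici ht ht
  exact sub_eq_zero.mp (pow_eq_zero_iff two_ne_zero |>.mp (le_antisymm hsq (sq_nonneg _)))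

end IsSol

lemma tendsto_affine_div_const_add (a b c : ℝ) :
    Tendsto (fun t => (a * t + b) / (c + t)) atTop (𝓝 a) := by
  have h : Tendsto (fun t => a + (b - a * c) * (c + t)⁻¹) atTop (𝓝 (a + (b - a * c) * 0)) :=
    tendsto_const_nhds.add ((tendsto_inv_atTop_zero.comp
      (tendsto_atTop_add_const_left _ c tendsto_id)).const_mul _)
  rw [mul_zero, add_zero] at h
  refine h.congr' ?_
  filter_upwards [eventually_gt_atTop (-c)] with t ht
  have : c + t ≠ 0 := by linarith
  field_simp
  ring

lemma tendsto_rpow_neg_div_rpow_neg {a : ℝ} (ha : 0 < a) (b c r : ℝ) :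
    Tendsto (fun t => (c + t) ^ (-r) / (a * t + b) ^ (-r)) atTop (𝓝 (a ^ r)) := by
  refine ((Real.continuousAt_rpow_const _ r (Or.inl ha.ne')).tendsto.comp
    (tendsto_affine_div_const_add a b c)).congr' ?_
  filter_upwards [(tendsto_atTop_add_const_left _ c tendsto_id).eventually_gt_atTop 0,
    (tendsto_atTop_add_const_right _ b (tendsto_id.const_mul_atTop ha)).eventually_gt_atTop 0]
    with t hct habt
  simp only [id] at hct habt
  rw [Function.comp_apply, Real.rpow_neg hct.le, Real.rpow_neg habt.le, inv_div_inv,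
    Real.div_rpow habt.le hct.le]

section PowerLaw

variable {β : ℝ}

lemma rpow_neg_one_div_rpow {s : ℝ} (hs : 0 ≤ s) (r : ℝ) :
    (s ^ (-(1 / (β - 1)))) ^ r = s ^ (-(r / (β - 1))) := by
  rw [← Real.rpow_mul hs]
  ring_nf

lemma mul_rpow_neg_one_div_rpow {A s : ℝ} (hA : 0 ≤ A) (hs : 0 ≤ s) (r : ℝ) :
    (A * s ^ (-(1 / (β - 1)))) ^ r = A ^ r * s ^ (-(r / (β - 1))) := by
  rw [Real.mul_rpow hA (Real.rpow_nonneg hs _), rpow_neg_one_div_rpow hs]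

lemma hasDerivAt_powerLaw (hβ : β ≠ 1) {A c t : ℝ} (hA : 0 ≤ A) (hct : 0 < c + t) :
    HasDerivAt (fun s => A * (c + s) ^ (-(1 / (β - 1))))
      (-(A * (c + t) ^ (-(1 / (β - 1)))) ^ β
        + (A ^ β - A / (β - 1)) * (c + t) ^ (-(β / (β - 1)))) t := by
  have hβ' : β - 1 ≠ 0 := sub_ne_zero.mpr hβ
  have h := (((hasDerivAt_id t).const_add c).rpow_const
    (p := -(1 / (β - 1))) (Or.inl hct.ne')).const_mul A
  refine h.congr_deriv ?_
  rw [mul_rpow_neg_one_div_rpow hA hct.le, show -(1 / (β - 1)) - 1 = -(β / (β - 1)) by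
    field_simp; ring]
  simp only [id]
  field_simp
  ring

lemma isSol_powerLaw {f g : ℝ → ℝ} {A ξ : ℝ} (hβ : β ≠ 1) (hA : 0 < A) (hξ : 0 < ξ)
    (hf : ∀ y, 0 < y → f y = y ^ β)
    (hg : ∀ t, 0 ≤ t →
      g t = (A ^ β - A / (β - 1)) * ((A / ξ) ^ (β - 1) + t) ^ (-(β / (β - 1)))) :
    IsSol f g ξ fun t => A * ((A / ξ) ^ (β - 1) + t) ^ (-(1 / (β - 1))) := by
  have hβ' : β - 1 ≠ 0 := sub_ne_zero.mpr hβ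
  have hc : 0 < (A / ξ) ^ (β - 1) := by positivity
  refine ⟨?_, ?_, fun t ht => ?_⟩
  · exact continuousOn_const.mul ((continuousOn_const.add continuousOn_id).rpow_const
      fun t (ht : 0 ≤ t) => Or.inl (add_pos_of_pos_of_nonneg hc ht).ne')
  · simp only [add_zero]
    rw [← Real.rpow_mul (by positivity), mul_neg, mul_one_div_cancel hβ',
      Real.rpow_neg_one, inv_div]
    field_simp
  · have hct : 0 < (A / ξ) ^ (β - 1) + t := by positivity
    rw [hf _ (by positivity), hg t ht.le]
    exact hasDerivAt_powerLaw hβ hA.le hct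

lemma integral_one_div_eq {f : ℝ → ℝ} (hβ : β ≠ 1) (hf : ∀ u, 0 < u → f u = u ^ β)
    {y : ℝ} (hy : 0 < y) : ∫ u in y..1, 1 / f u = (y ^ (1 - β) - 1) / (β - 1) := by
  have h0 : (0 : ℝ) ∉ uIcc y 1 := fun h => by
    rcases mem_uIcc.mp h with ⟨h1, -⟩ | ⟨h1, -⟩ <;> linarith
  have hpos : ∀ u ∈ uIcc y 1, 0 < u := fun u hu => by
    rcases mem_uIcc.mp hu with ⟨h1, -⟩ | ⟨h1, -⟩ <;> linarith
  rw [intervalIntegral.integral_congr (g := fun u => u ^ (-β)) fun u hu => by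
      simp only [hf u (hpos u hu), one_div, Real.rpow_neg (hpos u hu).le],
    integral_rpow (Or.inr ⟨fun h => hβ (neg_inj.mp h), h0⟩), Real.one_rpow,
    show -β + 1 = 1 - β by ring, ← neg_sub β 1, div_neg, ← neg_div, neg_sub]

lemma eq_rpow_of_div_sub_one_eq (hβ : β ≠ 1) {y t : ℝ} (hy : 0 < y)
    (h : (y ^ (1 - β) - 1) / (β - 1) = t) : y = ((β - 1) * t + 1) ^ (-(1 / (β - 1))) := by
  have hβ' : β - 1 ≠ 0 := sub_ne_zero.mpr hβ
  rw [← h, mul_div_cancel₀ _ hβ', sub_add_cancel, ← Real.rpow_mul hy.le,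
    show (1 - β) * -(1 / (β - 1)) = 1 by field_simp; ring, Real.rpow_one]

lemma tendsto_rpow_one_sub_powerLaw_div (hβ : β ≠ 1) {A c : ℝ} (hA : 0 < A) (hc : 0 ≤ c) :
    Tendsto (fun t => (((A * (c + t) ^ (-(1 / (β - 1)))) ^ (1 - β) - 1) / (β - 1)) / t) atTop
      (𝓝 (A ^ (1 - β) / (β - 1))) := by
  have hβ' : β - 1 ≠ 0 := sub_ne_zero.mpr hβ
  refine (tendsto_affine_div_const_add (A ^ (1 - β) / (β - 1))
    ((A ^ (1 - β) * c - 1) / (β - 1)) 0).congr' ?_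
  filter_upwards [eventually_gt_atTop 0] with t ht
  rw [mul_rpow_neg_one_div_rpow hA.le (by positivity : 0 ≤ c + t),
    show -((1 - β) / (β - 1)) = 1 by field_simp; ring, Real.rpow_one, zero_add]
  field_simp
  ring

end PowerLaw

section Constants

variable {β A : ℝ}

lemma inv_sub_one_lt_rpow_sub_one (hβ : 1 < β) (hA : (β - 1) ^ (-(1 / (β - 1))) < A) :
    (β - 1)⁻¹ < A ^ (β - 1) := by
  have hb : 0 < β - 1 := sub_pos.2 hβ
  have h := Real.rpow_lt_rpow (Real.rpow_nonneg hb.le _) hA hb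
  rwa [rpow_neg_one_div_rpow hb.le, div_self hb.ne', Real.rpow_neg_one] at h

lemma div_sub_one_lt_rpow (hA : 0 < A) (h : (β - 1)⁻¹ < A ^ (β - 1)) :
    A / (β - 1) < A ^ β := by
  rw [Real.rpow_sub_one hA.ne'] at h
  rw [div_eq_mul_inv]
  calc A * (β - 1)⁻¹ < A * (A ^ β / A) := mul_lt_mul_of_pos_left h hA
    _ = A ^ β := mul_div_cancel₀ _ hA.ne'

lemma rpow_one_sub_div_lt_one (hβ : 1 < β) (hA : 0 < A) (h : (β - 1)⁻¹ < A ^ (β - 1)) :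
    A ^ (1 - β) / (β - 1) < 1 := by
  have hb : 0 < β - 1 := sub_pos.2 hβ
  rw [div_lt_one hb, ← neg_sub, Real.rpow_neg hA.le]
  exact (inv_lt_comm₀ (by positivity) hb).mpr h

lemma one_sub_mul_rpow_eq (hβ : 1 < β) (hA : 0 < A) :
    (1 - A ^ (1 - β) / (β - 1)) * (A ^ (1 - β) / (β - 1)) ^ (-(β / (β - 1))) =
      (A ^ β - A / (β - 1)) / (β - 1) ^ (-(β / (β - 1))) := by
  have hb : 0 < β - 1 := sub_pos.2 hβ
  have hmul : A ^ (1 - β) * A ^ β = A := by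
    rw [← Real.rpow_add hA, sub_add_cancel, Real.rpow_one]
  have hpow : (A ^ (1 - β)) ^ (-(β / (β - 1))) = A ^ β := by
    rw [← Real.rpow_mul hA.le]
    congr 1
    field_simp
    ring
  rw [Real.div_rpow (by positivity) hb.le, hpow]
  have : (β - 1) ^ (-(β / (β - 1))) ≠ 0 := (Real.rpow_pos_of_pos hb _).ne'
  field_simp
  linear_combination -hmul

end Constants

/-- Example 3.3: with `β > 1`, `A > (β-1)^{-1/(β-1)}`, `ξ > 0`, `f(x) = sgn(x)|x|^β`
and the given positive perturbation `g`, the unique continuous solution of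
`x' = -f(x) + g`, `x(0) = ξ`, is `x(t) = A((A/ξ)^{β-1}+t)^{-1/(β-1)}`; moreover
`g(t)/(f∘F⁻¹)(t) → L := (A^β - A/(β-1))/(β-1)^{-β/(β-1)} > 0`,
`x(t)/F⁻¹(t) → A/(β-1)^{-1/(β-1)}`, and `F(x(t))/t → Λ* := A^{1-β}/(β-1) ∈ (0,1)`,
which satisfies `(1-Λ*)Λ*^{-β/(β-1)} = L`. -/
theorem stmt_17 (β A ξ : ℝ) (hβ : 1 < β)
    (hA : (β - 1) ^ (-((1:ℝ) / (β - 1))) < A) (hξ : 0 < ξ)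
    (f g F Finv x : ℝ → ℝ)
    (hf : ∀ y : ℝ, f y = Real.sign y * |y| ^ β)
    (hg : ∀ t : ℝ, 0 ≤ t → g t =
      (A ^ β - A / (β - 1)) * ((A / ξ) ^ (β - 1) + t) ^ (-(β / (β - 1))))
    (hxdef : ∀ t : ℝ, 0 ≤ t → x t = A * ((A / ξ) ^ (β - 1) + t) ^ (-(1 / (β - 1))))
    (hF : ∀ y : ℝ, 0 < y → F y = ∫ u in y..(1:ℝ), 1 / f u)
    (hFinv : ∀ t : ℝ, 0 ≤ t → 0 < Finv t ∧ F (Finv t) = t) :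
    (∀ t : ℝ, 0 ≤ t → 0 < g t) ∧
    IsSol f g ξ x ∧
    (∀ y : ℝ → ℝ, IsSol f g ξ y → ∀ t : ℝ, 0 ≤ t → y t = x t) ∧
    (0 < (A ^ β - A / (β - 1)) / (β - 1) ^ (-(β / (β - 1)))) ∧
    Tendsto (fun t => g t / f (Finv t)) atTop
      (nhds ((A ^ β - A / (β - 1)) / (β - 1) ^ (-(β / (β - 1))))) ∧
    Tendsto (fun t => x t / Finv t) atTop (nhds (A / (β - 1) ^ (-((1:ℝ) / (β - 1))))) ∧
    A ^ (1 - β) / (β - 1) ∈ Set.Ioo (0:ℝ) 1 ∧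
    Tendsto (fun t => F (x t) / t) atTop (nhds (A ^ (1 - β) / (β - 1))) ∧
    (1 - A ^ (1 - β) / (β - 1)) * (A ^ (1 - β) / (β - 1)) ^ (-(β / (β - 1))) =
      (A ^ β - A / (β - 1)) / (β - 1) ^ (-(β / (β - 1))) := by
  have hb : 0 < β - 1 := sub_pos.2 hβ
  have hA0 : 0 < A := (Real.rpow_pos_of_pos hb _).trans hA
  have hApow := inv_sub_one_lt_rpow_sub_one hβ hA
  have hcoef : 0 < A ^ β - A / (β - 1) := sub_pos.2 (div_sub_one_lt_rpow hA0 hApow)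
  have hfpos : ∀ y, 0 < y → f y = y ^ β := fun y hy => by
    rw [hf, Real.sign_of_pos hy, abs_of_pos hy, one_mul]
  have hFval : ∀ y, 0 < y → F y = (y ^ (1 - β) - 1) / (β - 1) := fun y hy =>
    (hF y hy).trans (integral_one_div_eq hβ.ne' hfpos hy)
  have hFinv_eq : ∀ t, 0 ≤ t → Finv t = ((β - 1) * t + 1) ^ (-(1 / (β - 1))) := fun t ht =>
    eq_rpow_of_div_sub_one_eq hβ.ne' (hFinv t ht).1
      ((hFval _ (hFinv t ht).1).symm.trans (hFinv t ht).2)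
  have hc : 0 < (A / ξ) ^ (β - 1) := by positivity
  have hsol : IsSol f g ξ x := (isSol_powerLaw hβ.ne' hA0 hξ hfpos hg).congr hxdef
  have hmono : Monotone f := funext hf ▸ monotone_sign_mul_abs_rpow (by linarith)
  refine ⟨fun t ht => ?_, hsol, fun y hy t ht => hy.eqOn_of_monotone hmono hsol ht,
    div_pos hcoef (by positivity), ?_, ?_,
    ⟨by positivity, rpow_one_sub_div_lt_one hβ hA0 hApow⟩, ?_, one_sub_mul_rpow_eq hβ hA0⟩
  · rw [hg t ht]
    positivity
  · rw [Real.rpow_neg hb.le, div_inv_eq_mul]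
    refine ((tendsto_rpow_neg_div_rpow_neg hb 1 ((A / ξ) ^ (β - 1)) _).const_mul
      (A ^ β - A / (β - 1))).congr' ?_
    filter_upwards [eventually_ge_atTop 0] with t ht
    have : 0 < (β - 1) * t + 1 := by positivity
    rw [hg t ht, hFinv_eq t ht, hfpos _ (by positivity), rpow_neg_one_div_rpow this.le,
      mul_div_assoc]
  · rw [Real.rpow_neg hb.le, div_inv_eq_mul]
    refine ((tendsto_rpow_neg_div_rpow_neg hb 1 ((A / ξ) ^ (β - 1)) _).const_mul A).congr' ?_
    filter_upwards [eventually_ge_atTop 0] with t ht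
    rw [hxdef t ht, hFinv_eq t ht, mul_div_assoc]
  · refine (tendsto_rpow_one_sub_powerLaw_div hβ.ne' hA0 hc.le).congr' ?_
    filter_upwards [eventually_gt_atTop 0] with t ht
    rw [hxdef t ht.le, hFval _ (by positivity)]
end
end
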